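/- arXiv:2002.04567 — 2 statements merged into one kernel-verified Lean document; each statement's English description precedes it below -/
import Mathlib

section
/- Let $X$ be a set with a set-theoretic Yang-Baxter operator $R$ (invertible and satisfying the Yang-Baxter equation), and suppose $R(x, y) = (x, y)$. If $(\mathrm{Id} \times R)(R \times \mathrm{Id})(z, x, y) = (u, v, w)$ for some $z \in X$, then $R(u, v) = (u, v)$. -/
open Function

theorem Function.IsFixedPt.braid {α : Type*} {f g : α → α} {p : α} (hp : IsFixedPt g p)
    (hbraid : f ∘ g ∘ f = g ∘ f ∘ g) : IsFixedPt f (g (f p)) := by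
  change (f ∘ g ∘ f) p = g (f p)
  rw [hbraid, comp_apply, comp_apply, hp.eq]

theorem fixed_pair_right_propagation_general {X : Type*} (R : X × X → X × X)
    (Rl Rr : X × X × X → X × X × X)
    (hRl : ∀ x y z : X, Rl (x, y, z) = ((R (x, y)).1, (R (x, y)).2, z))
    (hRr : ∀ x y z : X, Rr (x, y, z) = (x, R (y, z)))
    (hYB : Rl ∘ Rr ∘ Rl = Rr ∘ Rl ∘ Rr)
    (x y z u v w : X)
    (hfix : R (x, y) = (x, y))
    (h : Rr (Rl (z, x, y)) = (u, v, w)) :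
    R (u, v) = (u, v) := by
  have hRr_fix : IsFixedPt Rr (z, x, y) := by
    rw [IsFixedPt, hRr, hfix]
  have hRl_fix : IsFixedPt Rl (u, v, w) := h ▸ hRr_fix.braid hYB
  rw [IsFixedPt, hRl, Prod.mk.injEq, Prod.mk.injEq] at hRl_fix
  exact Prod.ext hRl_fix.1 hRl_fix.2.1

/-- Fixed pairs of a set-theoretic Yang-Baxter operator propagate under the right
face maps: if `R(x,y) = (x,y)` and `(Id × R)(R × Id)(z,x,y) = (u,v,w)`,
then `R(u,v) = (u,v)`. -/
theorem fixed_pair_right_propagation {X : Type*} (R : X × X → X × X)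
    (hbij : Function.Bijective R)
    (Rl Rr : X × X × X → X × X × X)
    (hRl : ∀ x y z : X, Rl (x, y, z) = ((R (x, y)).1, (R (x, y)).2, z))
    (hRr : ∀ x y z : X, Rr (x, y, z) = (x, R (y, z)))
    (hYB : Rl ∘ Rr ∘ Rl = Rr ∘ Rl ∘ Rr)
    (x y z u v w : X)
    (hfix : R (x, y) = (x, y))
    (h : Rr (Rl (z, x, y)) = (u, v, w)) :
    R (u, v) = (u, v) :=
  fixed_pair_right_propagation_general R Rl Rr hRl hRr hYB x y z u v w hfix h
end

section
/- Let $X$ be a biquandle with set-theoretic Yang-Baxter operator $R$, and let $C_n^D(X) \subseteq \mathbb{Z}[X^n]$ be the subgroup spanned by tuples $(x_1, \ldots, x_n)$ with $R(x_i, x_{i+1}) = (x_i, x_{i+1})$ for some $i$. Then the Yang-Baxter boundary map $\partial_n^{YB} = \sum_{i=1}^n (-1)^{i+1}(d_{i,n}^l - d_{i,n}^r)$ maps $C_n^D(X)$ into $C_{n-1}^D(X)$, i.e., the degenerate chains form a subcomplex of the set-theoretic Yang-Baxter chain complex. -/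
/-- Left pass of a mover through a list (each passed entry `y` becomes `R₂ (y, m)`,
the mover continues as `R₁ (y, m)`). -/
def ybPassL {X : Type*} (R : X → X → X × X) : List X → X → List X × X
  | [], m => ([], m)
  | y :: t, m =>
      let p := ybPassL R t m
      ((R y p.2).2 :: p.1, (R y p.2).1)

/-- Right pass of a mover through a list (each passed entry `y` becomes `R₁ (m, y)`,
the mover continues as `R₂ (m, y)`). -/
def ybPassR {X : Type*} (R : X → X → X × X) : X → List X → List X
  | _, [] => []
  | m, y :: t => (R m y).1 :: ybPassR R (R m y).2 t

/-- The left Yang-Baxter face map `dᵢˡ : Xⁿ → Xⁿ⁻¹`. -/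
def ybFaceL {X : Type*} (R : X → X → X × X) (i : ℕ) (l : List X) : List X :=
  match l.drop (i - 1) with
  | [] => l.take (i - 1)
  | m :: suf => (ybPassL R (l.take (i - 1)) m).1 ++ suf

/-- The right Yang-Baxter face map `dᵢʳ : Xⁿ → Xⁿ⁻¹`. -/
def ybFaceR {X : Type*} (R : X → X → X × X) (i : ℕ) (l : List X) : List X :=
  match l.drop (i - 1) with
  | [] => l.take (i - 1)
  | m :: suf => l.take (i - 1) ++ ybPassR R m suf

/-- The Yang-Baxter boundary map `∂ = Σᵢ (-1)^{i+1} (dᵢˡ - dᵢʳ)`. -/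
noncomputable def ybBoundary {X : Type*} (R : X → X → X × X) :
    FreeAbelianGroup (List X) →+ FreeAbelianGroup (List X) :=
  FreeAbelianGroup.lift fun l =>
    ∑ i ∈ Finset.Icc 1 l.length, ((-1 : ℤ) ^ (i + 1)) •
      (FreeAbelianGroup.of (ybFaceL R i l) - FreeAbelianGroup.of (ybFaceR R i l))

/-- A tuple is degenerate when some adjacent pair is fixed by `R`. -/
def ybDegenerate {X : Type*} (R : X → X → X × X) (l : List X) : Prop :=
  ∃ (s t : List X) (a b : X), l = s ++ a :: b :: t ∧ R a b = (a, b)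

/-! Write a degenerate tuple as `s ++ a :: b :: t` with `R a b = (a, b)`. Since `R` fixes `(a, b)`,
the faces at positions `|s| + 1` and `|s| + 2` coincide, and they enter the boundary with opposite
signs, so they cancel. Every other face pushes one strand `m` through the fixed pair, and the
Yang-Baxter equation at `(m, a, b)` or `(a, b, m)` says that the pair it leaves behind is again
fixed by `R`, so that face is degenerate. -/

section Faces

variable {X : Type*} (R : X → X → X × X)

@[simp]
lemma length_ybPassL (l : List X) (m : X) : (ybPassL R l m).1.length = l.length := by
  induction l <;> simp [ybPassL, *]

@[simp]
lemma length_ybPassR (m : X) (l : List X) : (ybPassR R m l).length = l.length := by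
  induction l generalizing m <;> simp [ybPassR, *]

lemma ybPassL_append (u v : List X) (m : X) :
    ybPassL R (u ++ v) m =
      ((ybPassL R u (ybPassL R v m).2).1 ++ (ybPassL R v m).1,
        (ybPassL R u (ybPassL R v m).2).2) := by
  induction u with
  | nil => simp [ybPassL]
  | cons y t ih => simp [ybPassL, ih]

lemma ybFaceL_append_cons {A : List X} {j : ℕ} (hA : A.length = j) (m : X) (B : List X) :
    ybFaceL R (j + 1) (A ++ m :: B) = (ybPassL R A m).1 ++ B := by
  subst hA
  simp [ybFaceL]

lemma ybFaceR_append_cons {A : List X} {j : ℕ} (hA : A.length = j) (m : X) (B : List X) :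
    ybFaceR R (j + 1) (A ++ m :: B) = A ++ ybPassR R m B := by
  subst hA
  simp [ybFaceR]

lemma eq_take_append_getElem_cons_drop {l : List X} {j : ℕ} (hj : j < l.length) :
    l = l.take j ++ l[j] :: l.drop (j + 1) := by
  rw [← List.drop_eq_getElem_cons hj, List.take_append_drop]

lemma ybFaceL_succ {l : List X} {j : ℕ} (hj : j < l.length) :
    ybFaceL R (j + 1) l = (ybPassL R (l.take j) l[j]).1 ++ l.drop (j + 1) := by
  conv_lhs => rw [eq_take_append_getElem_cons_drop hj]
  exact ybFaceL_append_cons R (by simp; omega) _ _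

lemma ybFaceR_succ {l : List X} {j : ℕ} (hj : j < l.length) :
    ybFaceR R (j + 1) l = l.take j ++ ybPassR R l[j] (l.drop (j + 1)) := by
  conv_lhs => rw [eq_take_append_getElem_cons_drop hj]
  exact ybFaceR_append_cons R (by simp; omega) _ _

lemma length_ybFaceL_succ {l : List X} {j : ℕ} (hj : j < l.length) :
    (ybFaceL R (j + 1) l).length = l.length - 1 := by
  rw [ybFaceL_succ R hj]
  simp
  omega

lemma length_ybFaceR_succ {l : List X} {j : ℕ} (hj : j < l.length) :
    (ybFaceR R (j + 1) l).length = l.length - 1 := by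
  rw [ybFaceR_succ R hj]
  simp
  omega

lemma ybBoundary_of (l : List X) :
    ybBoundary R (FreeAbelianGroup.of l) = ∑ j ∈ Finset.range l.length, (-1 : ℤ) ^ j •
      (FreeAbelianGroup.of (ybFaceL R (j + 1) l) - FreeAbelianGroup.of (ybFaceR R (j + 1) l)) := by
  rw [ybBoundary, FreeAbelianGroup.lift_apply_of, Finset.range_eq_Ico,
    ← Finset.Ico_add_one_right_eq_Icc, ← zero_add 1, ← Finset.sum_Ico_add']
  simp [pow_succ]

lemma ybFaceL_eq_of_fixed {a b : X} (hab : R a b = (a, b)) (s t : List X) :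
    ybFaceL R (s.length + 1 + 1) (s ++ a :: b :: t) =
      ybFaceL R (s.length + 1) (s ++ a :: b :: t) := by
  rw [ybFaceL_append_cons R rfl, show s ++ a :: b :: t = (s ++ [a]) ++ b :: t by simp,
    ybFaceL_append_cons R (by simp), ybPassL_append]
  simp [ybPassL, hab]

lemma ybFaceR_eq_of_fixed {a b : X} (hab : R a b = (a, b)) (s t : List X) :
    ybFaceR R (s.length + 1 + 1) (s ++ a :: b :: t) =
      ybFaceR R (s.length + 1) (s ++ a :: b :: t) := by
  rw [ybFaceR_append_cons R rfl, ybPassR, hab,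
    show s ++ a :: b :: t = (s ++ [a]) ++ b :: t by simp, ybFaceR_append_cons R (by simp)]
  simp

end Faces

namespace ybDegenerate

variable {X : Type*} {R : X → X → X × X} {l : List X}

lemma cons (h : ybDegenerate R l) (x : X) : ybDegenerate R (x :: l) := by
  obtain ⟨s, t, a, b, rfl, hab⟩ := h
  exact ⟨x :: s, t, a, b, rfl, hab⟩

lemma append_left (h : ybDegenerate R l) (u : List X) : ybDegenerate R (u ++ l) := by
  obtain ⟨s, t, a, b, rfl, hab⟩ := h
  exact ⟨u ++ s, t, a, b, by simp, hab⟩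

lemma append_right (h : ybDegenerate R l) (u : List X) : ybDegenerate R (l ++ u) := by
  obtain ⟨s, t, a, b, rfl, hab⟩ := h
  exact ⟨s, t ++ u, a, b, by simp, hab⟩

lemma drop {s t : List X} {a b : X} (hab : R a b = (a, b)) {k : ℕ} (hk : k ≤ s.length) :
    ybDegenerate R ((s ++ a :: b :: t).drop k) :=
  ⟨s.drop k, t, a, b, List.drop_append_of_le_length hk, hab⟩

lemma take {s t : List X} {a b : X} (hab : R a b = (a, b)) {k : ℕ} (hk : s.length + 2 ≤ k) :
    ybDegenerate R ((s ++ a :: b :: t).take k) := by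
  refine ⟨s, t.take (k - s.length - 2), a, b, ?_, hab⟩
  rw [List.take_append, List.take_of_length_le (by omega),
    show k - s.length = k - s.length - 2 + 1 + 1 by omega]
  rfl

end ybDegenerate

section Braid

variable {X : Type*} {R : X → X → X × X} {Rl Rr : X × X × X → X × X × X}

lemma fixed_of_braid_right
    (hRl : ∀ x y z : X, Rl (x, y, z) = ((R x y).1, (R x y).2, z))
    (hRr : ∀ x y z : X, Rr (x, y, z) = (x, (R y z).1, (R y z).2))
    (hYB : Rl ∘ Rr ∘ Rl = Rr ∘ Rl ∘ Rr) {a b : X} (hab : R a b = (a, b)) (m : X) :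
    R (R m a).1 (R (R m a).2 b).1 = ((R m a).1, (R (R m a).2 b).1) := by
  have h := congrFun hYB (m, a, b)
  simp only [Function.comp_apply, hRl, hRr, hab, Prod.mk.injEq] at h
  exact Prod.ext h.1 h.2.1

lemma fixed_of_braid_left
    (hRl : ∀ x y z : X, Rl (x, y, z) = ((R x y).1, (R x y).2, z))
    (hRr : ∀ x y z : X, Rr (x, y, z) = (x, (R y z).1, (R y z).2))
    (hYB : Rl ∘ Rr ∘ Rl = Rr ∘ Rl ∘ Rr) {a b : X} (hab : R a b = (a, b)) (m : X) :
    R (R a (R b m).1).2 (R b m).2 = ((R a (R b m).1).2, (R b m).2) := by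
  have h := congrFun hYB (a, b, m)
  simp only [Function.comp_apply, hRl, hRr, hab, Prod.mk.injEq] at h
  exact Prod.ext h.2.1.symm h.2.2.symm

lemma ybDegenerate.ybPassR
    (hRl : ∀ x y z : X, Rl (x, y, z) = ((R x y).1, (R x y).2, z))
    (hRr : ∀ x y z : X, Rr (x, y, z) = (x, (R y z).1, (R y z).2))
    (hYB : Rl ∘ Rr ∘ Rl = Rr ∘ Rl ∘ Rr) {l : List X} (h : ybDegenerate R l) (m : X) :
    ybDegenerate R (ybPassR R m l) := by
  obtain ⟨s, t, a, b, rfl, hab⟩ := h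
  induction s generalizing m with
  | nil =>
    exact ⟨[], _, _, _, rfl, fixed_of_braid_right hRl hRr hYB hab m⟩
  | cons y s ih => exact (ih _).cons _

lemma ybDegenerate.ybPassL
    (hRl : ∀ x y z : X, Rl (x, y, z) = ((R x y).1, (R x y).2, z))
    (hRr : ∀ x y z : X, Rr (x, y, z) = (x, (R y z).1, (R y z).2))
    (hYB : Rl ∘ Rr ∘ Rl = Rr ∘ Rl ∘ Rr) {l : List X} (h : ybDegenerate R l) (m : X) :
    ybDegenerate R (ybPassL R l m).1 := by
  obtain ⟨s, t, a, b, rfl, hab⟩ := h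
  induction s with
  | nil =>
    exact ⟨[], _, _, _, rfl, fixed_of_braid_left hRl hRr hYB hab (_root_.ybPassL R t m).2⟩
  | cons y s ih => exact ih.cons _

lemma ybDegenerate_ybFaceL_succ
    (hRl : ∀ x y z : X, Rl (x, y, z) = ((R x y).1, (R x y).2, z))
    (hRr : ∀ x y z : X, Rr (x, y, z) = (x, (R y z).1, (R y z).2))
    (hYB : Rl ∘ Rr ∘ Rl = Rr ∘ Rl ∘ Rr) {s t : List X} {a b : X} (hab : R a b = (a, b))
    {j : ℕ} (hj : j < (s ++ a :: b :: t).length) (hjs : j ≠ s.length)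
    (hjs' : j ≠ s.length + 1) : ybDegenerate R (ybFaceL R (j + 1) (s ++ a :: b :: t)) := by
  rw [ybFaceL_succ R hj]
  rcases lt_or_gt_of_ne hjs with hlt | hgt
  · exact (ybDegenerate.drop hab (by omega)).append_left _
  · exact ((ybDegenerate.take hab (by omega)).ybPassL hRl hRr hYB _).append_right _

lemma ybDegenerate_ybFaceR_succ
    (hRl : ∀ x y z : X, Rl (x, y, z) = ((R x y).1, (R x y).2, z))
    (hRr : ∀ x y z : X, Rr (x, y, z) = (x, (R y z).1, (R y z).2))
    (hYB : Rl ∘ Rr ∘ Rl = Rr ∘ Rl ∘ Rr) {s t : List X} {a b : X} (hab : R a b = (a, b))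
    {j : ℕ} (hj : j < (s ++ a :: b :: t).length) (hjs : j ≠ s.length)
    (hjs' : j ≠ s.length + 1) : ybDegenerate R (ybFaceR R (j + 1) (s ++ a :: b :: t)) := by
  rw [ybFaceR_succ R hj]
  rcases lt_or_gt_of_ne hjs with hlt | hgt
  · exact ((ybDegenerate.drop hab (by omega)).ybPassR hRl hRr hYB _).append_left _
  · exact (ybDegenerate.take hab (by omega)).append_right _

end Braid

theorem yb_boundary_degenerate_general {X : Type*} (R : X → X → X × X)
    (Rl Rr : X × X × X → X × X × X)
    (hRl : ∀ x y z : X, Rl (x, y, z) = ((R x y).1, (R x y).2, z))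
    (hRr : ∀ x y z : X, Rr (x, y, z) = (x, (R y z).1, (R y z).2))
    (hYB : Rl ∘ Rr ∘ Rl = Rr ∘ Rl ∘ Rr)
    (n : ℕ) (l : List X) (hl : l.length = n) (hdeg : ybDegenerate R l) :
    ybBoundary R (FreeAbelianGroup.of l) ∈
      AddSubgroup.closure {c : FreeAbelianGroup (List X) |
        ∃ l' : List X, l'.length = n - 1 ∧ ybDegenerate R l' ∧
          c = FreeAbelianGroup.of l'} := by
  obtain ⟨s, t, a, b, rfl, hab⟩ := hdeg
  have hs : s.length ∈ Finset.range (s ++ a :: b :: t).length := by simp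
  have hs' : s.length + 1 ∈ (Finset.range (s ++ a :: b :: t).length).erase s.length := by
    simp
  rw [ybBoundary_of, ← Finset.add_sum_erase _ _ hs, ← Finset.add_sum_erase _ _ hs',
    ← add_assoc, ybFaceL_eq_of_fixed R hab, ybFaceR_eq_of_fixed R hab, pow_succ, mul_neg_one,
    neg_smul, add_neg_cancel, zero_add]
  refine AddSubgroup.sum_mem _ fun j hj => ?_
  obtain ⟨hjs', hjs, hj⟩ :
      j ≠ s.length + 1 ∧ j ≠ s.length ∧ j < (s ++ a :: b :: t).length := by
    simpa using hj
  refine AddSubgroup.zsmul_mem _ (AddSubgroup.sub_mem _ (AddSubgroup.subset_closure ?_)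
    (AddSubgroup.subset_closure ?_)) _
  · exact ⟨_, hl ▸ length_ybFaceL_succ R hj,
      ybDegenerate_ybFaceL_succ hRl hRr hYB hab hj hjs hjs', rfl⟩
  · exact ⟨_, hl ▸ length_ybFaceR_succ R hj,
      ybDegenerate_ybFaceR_succ hRl hRr hYB hab hj hjs hjs', rfl⟩

/-- For a biquandle, the Yang-Baxter boundary of a degenerate `n`-chain is a degenerate
`(n-1)`-chain: the degenerate chains form a subcomplex. -/
theorem yb_boundary_degenerate {X : Type*} (R : X → X → X × X)
    (hbij : Function.Bijective fun p : X × X => R p.1 p.2)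
    (Rl Rr : X × X × X → X × X × X)
    (hRl : ∀ x y z : X, Rl (x, y, z) = ((R x y).1, (R x y).2, z))
    (hRr : ∀ x y z : X, Rr (x, y, z) = (x, (R y z).1, (R y z).2))
    (hYB : Rl ∘ Rr ∘ Rl = Rr ∘ Rl ∘ Rr)
    (hleft : ∀ a c : X, ∃! b : X, (R a b).1 = c)
    (hright : ∀ b d : X, ∃! a : X, (R a b).2 = d)
    (hfix : ∀ x : X, ∃! y : X, R x y = (x, y))
    (n : ℕ) (hn : 2 ≤ n) (l : List X) (hl : l.length = n) (hdeg : ybDegenerate R l) :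
    ybBoundary R (FreeAbelianGroup.of l) ∈
      AddSubgroup.closure {c : FreeAbelianGroup (List X) |
        ∃ l' : List X, l'.length = n - 1 ∧ ybDegenerate R l' ∧
          c = FreeAbelianGroup.of l'} :=
  yb_boundary_degenerate_general R Rl Rr hRl hRr hYB n l hl hdeg
end
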